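/- Let (tₙ)_{n≥0} be strictly increasing with t₀ = 0 and tₙ → 1, and let (aₙ)_{n≥0} be a nonincreasing sequence of positive reals with aₙ → 0 and Σₙ aₙ = ∞. Let x¹ : [0,1] → ℝ be the continuous zigzag function which on [t_{2n}, t_{2n+1}] increases linearly from 0 to aₙ and on [t_{2n+1}, t_{2n+2}] decreases linearly from aₙ to 0, with x¹(1) = 0. Then for every c > 0, TV^c(x¹,[0,1]) = 2·Σ_{n≥0} max(aₙ − c, 0). -/

import Mathlib

/-!
Lower bound: the partition `t 0 < ⋯ < t (2n+1) < 1` through the troughs and peaks has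
jumps `a 0, a 0, a 1, a 1, …, a n, a n`.

Upper bound: on the rising half of the `k`-th tooth put
`Ψ s = 2 ∑_{j<k} (a j - c)⁺ + (x s - c)⁺`, on the falling half
`Ψ s = 2 ∑_{j≤k} (a j - c)⁺ - (x s - c)⁺`. Since `d ↦ (d - c)⁺` is superadditive on `[0, ∞)`
for `c ≥ 0`, `(|x v - x u| - c)⁺ ≤ Ψ v - Ψ u` whenever `u ≤ v < 1`, so the truncated sum of any
partition of `[0, 1)` telescopes to at most `2 ∑ (a j - c)⁺`. Partition points at `1` can be
moved to a zero `t (2N)` of `x` lying beyond all the others.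
-/

open scoped ENNReal
open Filter

/-- Truncated variation of `x` with parameter `c` on `[s,t]`. -/
noncomputable def truncVar (x : ℝ → ℝ) (c s t : ℝ) : ℝ≥0∞ :=
  ⨆ (n : ℕ) (u : Fin (n + 1) → ℝ) (_ : Monotone u) (_ : u 0 = s)
    (_ : u (Fin.last n) = t),
    ∑ i : Fin n, ENNReal.ofReal (|x (u i.succ) - x (u i.castSucc)| - c)

open Set

section TruncatedVariation

variable {x : ℝ → ℝ} {c s t : ℝ}

theorem sum_le_truncVar {n : ℕ} {u : Fin (n + 1) → ℝ} (hu : Monotone u) :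
    ∑ i : Fin n, ENNReal.ofReal (|x (u i.succ) - x (u i.castSucc)| - c) ≤
      truncVar x c (u 0) (u (Fin.last n)) :=
  le_iSup_of_le n <| le_iSup_of_le u <| le_iSup_of_le hu <| le_iSup_of_le rfl <|
    le_iSup_of_le rfl le_rfl

theorem truncVar_le {B : ℝ≥0∞}
    (h : ∀ (n : ℕ) (u : Fin (n + 1) → ℝ), Monotone u → u 0 = s → u (Fin.last n) = t →
      ∑ i : Fin n, ENNReal.ofReal (|x (u i.succ) - x (u i.castSucc)| - c) ≤ B) :
    truncVar x c s t ≤ B := by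
  simp only [truncVar, iSup_le_iff]
  exact h

end TruncatedVariation

theorem sum_le_sub_of_forall_le_sub {α : Type*} [Preorder α] {s : Set α} {g : α → α → ℝ}
    {Ψ : α → ℝ} (h : ∀ p ∈ s, ∀ q ∈ s, p ≤ q → g p q ≤ Ψ q - Ψ p) :
    ∀ {n : ℕ} {u : Fin (n + 1) → α}, Monotone u → (∀ i, u i ∈ s) →
      ∑ i : Fin n, g (u i.castSucc) (u i.succ) ≤ Ψ (u (Fin.last n)) - Ψ (u 0)
  | 0, u, _, _ => by simp
  | n + 1, u, hu, hs => by
    have ih := sum_le_sub_of_forall_le_sub h (u := u ∘ Fin.castSucc)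
      (hu.comp Fin.strictMono_castSucc.monotone) (fun i => hs _)
    have hlast := h _ (hs (Fin.last n).castSucc) _ (hs (Fin.last (n + 1)))
      (hu (Fin.castSucc_lt_succ.le))
    simp only [Function.comp_apply, ← Fin.succ_castSucc, Fin.castSucc_zero] at ih
    rw [Fin.sum_univ_castSucc, Fin.succ_last]
    linarith

section TruncatedExcess

variable {c v w : ℝ}

theorem max_sub_zero_mono (h : v ≤ w) : max (v - c) 0 ≤ max (w - c) 0 :=
  max_le_max_right 0 (sub_le_sub_right h c)

theorem max_sub_sub_zero_le (hc : 0 ≤ c) (hv : 0 ≤ v) (hvw : v ≤ w) :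
    max (w - v - c) 0 ≤ max (w - c) 0 - max (v - c) 0 := by
  rcases le_total (w - v) c with h₁ | h₁ <;> rcases le_total v c with h₂ | h₂ <;>
    simp only [max_def] <;> split_ifs <;> linarith

theorem max_abs_sub_sub_zero_le (hv : 0 ≤ v) (hw : 0 ≤ w) :
    max (|w - v| - c) 0 ≤ max (v - c) 0 + max (w - c) 0 := by
  rcases abs_cases (w - v) with ⟨h, _⟩ | ⟨h, _⟩ <;> rw [h]
  · exact le_add_of_nonneg_of_le (le_max_right _ _) (max_sub_zero_mono (by linarith))
  · exact le_add_of_le_of_nonneg (max_sub_zero_mono (by linarith)) (le_max_right _ _)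

end TruncatedExcess

-- `m` indexes the segment `[t m, t (m + 1))`, which rises iff `m` is even, and `v` is the value of
-- `x` there; this is the potential `Ψ` of the upper bound.
noncomputable def zigzagPotential (a : ℕ → ℝ) (c : ℝ) (m : ℕ) (v : ℝ) : ℝ :=
  2 * ∑ j ∈ Finset.range (m / 2), max (a j - c) 0 +
    if Even m then max (v - c) 0 else 2 * max (a (m / 2) - c) 0 - max (v - c) 0

section ZigzagPotential

variable {a : ℕ → ℝ} {c : ℝ} {m m' : ℕ} {v v' : ℝ}

theorem le_zigzagPotential (hv : v ≤ a (m / 2)) :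
    2 * ∑ j ∈ Finset.range (m / 2), max (a j - c) 0 + max (v - c) 0 ≤
      zigzagPotential a c m v := by
  have := max_sub_zero_mono (c := c) hv
  unfold zigzagPotential
  split_ifs <;> linarith

theorem zigzagPotential_le (hv : v ≤ a (m / 2)) :
    zigzagPotential a c m v ≤
      2 * ∑ j ∈ Finset.range (m / 2 + 1), max (a j - c) 0 - max (v - c) 0 := by
  have := max_sub_zero_mono (c := c) hv
  unfold zigzagPotential
  rw [Finset.sum_range_succ]
  split_ifs <;> linarith

theorem zigzagPotential_nonneg (hv : v ≤ a (m / 2)) : 0 ≤ zigzagPotential a c m v :=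
  le_trans (by positivity) (le_zigzagPotential hv)

theorem ofReal_zigzagPotential_le (hv : v ≤ a (m / 2)) :
    ENNReal.ofReal (zigzagPotential a c m v) ≤
      2 * ∑' j, ENNReal.ofReal (max (a j - c) 0) := by
  have hle : zigzagPotential a c m v ≤
      2 * ∑ j ∈ Finset.range (m / 2 + 1), max (a j - c) 0 :=
    (zigzagPotential_le hv).trans (sub_le_self _ (le_max_right _ _))
  calc ENNReal.ofReal (zigzagPotential a c m v)
      ≤ ENNReal.ofReal (2 * ∑ j ∈ Finset.range (m / 2 + 1), max (a j - c) 0) :=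
        ENNReal.ofReal_le_ofReal hle
    _ = 2 * ∑ j ∈ Finset.range (m / 2 + 1), ENNReal.ofReal (max (a j - c) 0) := by
        rw [ENNReal.ofReal_mul zero_le_two, ENNReal.ofReal_ofNat,
          ENNReal.ofReal_sum_of_nonneg fun _ _ => le_max_right _ _]
    _ ≤ 2 * ∑' j, ENNReal.ofReal (max (a j - c) 0) := by
        gcongr
        exact ENNReal.sum_le_tsum _

theorem max_abs_sub_sub_zero_le_zigzagPotential_sub (hc : 0 ≤ c) (hmm' : m ≤ m')
    (hv : v ∈ Icc 0 (a (m / 2))) (hv' : v' ∈ Icc 0 (a (m' / 2)))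
    (hsame : m = m' → (Even m → v ≤ v') ∧ (¬ Even m → v' ≤ v)) :
    max (|v' - v| - c) 0 ≤ zigzagPotential a c m' v' - zigzagPotential a c m v := by
  have hjump := max_abs_sub_sub_zero_le (c := c) hv.1 hv'.1
  rcases (Nat.div_le_div_right hmm' : m / 2 ≤ m' / 2).lt_or_eq with hlt | htooth
  · have hS : ∑ j ∈ Finset.range (m / 2 + 1), max (a j - c) 0 ≤
        ∑ j ∈ Finset.range (m' / 2), max (a j - c) 0 :=
      Finset.sum_le_sum_of_subset_of_nonneg (Finset.range_subset_range.mpr hlt)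
        fun _ _ _ => le_max_right _ _
    linarith [zigzagPotential_le (c := c) hv.2, le_zigzagPotential (c := c) hv'.2]
  rcases hmm'.lt_or_eq with hlt | rfl
  · obtain rfl : m' = m + 1 := by omega
    have hm : Even m := Nat.even_iff.mpr (by omega)
    have hm' : ¬ Even (m + 1) := Nat.not_even_iff_odd.mpr hm.add_one
    unfold zigzagPotential
    rw [if_pos hm, if_neg hm', ← htooth]
    rw [← htooth] at hv'
    have := max_sub_zero_mono (c := c) hv.2
    have := max_sub_zero_mono (c := c) hv'.2
    rcases le_total v v' with h | h
    · rw [abs_of_nonneg (sub_nonneg.mpr h)]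
      linarith [max_sub_sub_zero_le hc hv.1 h]
    · rw [abs_of_nonpos (sub_nonpos.mpr h), neg_sub]
      linarith [max_sub_sub_zero_le hc hv'.1 h]
  · unfold zigzagPotential
    by_cases hm : Even m
    · have h := (hsame rfl).1 hm
      rw [if_pos hm, if_pos hm, abs_of_nonneg (sub_nonneg.mpr h)]
      linarith [max_sub_sub_zero_le hc hv.1 h]
    · have h := (hsame rfl).2 hm
      rw [if_neg hm, if_neg hm, abs_of_nonpos (sub_nonpos.mpr h), neg_sub]
      linarith [max_sub_sub_zero_le hc hv'.1 h]

end ZigzagPotential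

theorem exists_mem_Ico_of_tendsto {t : ℕ → ℝ} {L s : ℝ} (htlim : Tendsto t atTop (nhds L))
    (hs₀ : t 0 ≤ s) (hs : s < L) : ∃ m, s ∈ Ico (t m) (t (m + 1)) := by
  by_contra h
  have hle : ∀ m, t m ≤ s := fun m =>
    Nat.rec hs₀ (fun m hm => not_lt.mp fun hm' => h ⟨m, hm, hm'⟩) m
  exact hs.not_ge (le_of_tendsto' htlim hle)

theorem Monotone.le_of_mem_Ico_of_le {t : ℕ → ℝ} (ht : Monotone t) {m m' : ℕ} {u v : ℝ}
    (hu : u ∈ Ico (t m) (t (m + 1))) (hv : v ∈ Ico (t m') (t (m' + 1))) (huv : u ≤ v) :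
    m ≤ m' := by
  by_contra! h
  have := ht (Nat.succ_le_of_lt h)
  linarith [hu.1, hv.2]

theorem mul_div_mem_Icc {a p q : ℝ} (ha : 0 ≤ a) (hp : 0 ≤ p) (hpq : p ≤ q) (hq : 0 < q) :
    a * p / q ∈ Icc 0 a :=
  ⟨by positivity, by rw [div_le_iff₀ hq]; exact mul_le_mul_of_nonneg_left hpq ha⟩

theorem sum_range_two_mul_div_two {M : Type*} [CommSemiring M] (f : ℕ → M) (n : ℕ) :
    ∑ k ∈ Finset.range (2 * n), f (k / 2) = 2 * ∑ j ∈ Finset.range n, f j := by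
  induction n with
  | zero => simp
  | succ n ih =>
    rw [show 2 * (n + 1) = 2 * n + 1 + 1 by ring, Finset.sum_range_succ, Finset.sum_range_succ,
      ih, Finset.sum_range_succ, show (2 * n + 1) / 2 = n by omega, show 2 * n / 2 = n by omega]
    ring

structure IsZigzag (t a : ℕ → ℝ) (x : ℝ → ℝ) : Prop where
  up : ∀ n : ℕ, ∀ s ∈ Ico (t (2 * n)) (t (2 * n + 1)),
    x s = a n * (s - t (2 * n)) / (t (2 * n + 1) - t (2 * n))
  down : ∀ n : ℕ, ∀ s ∈ Ico (t (2 * n + 1)) (t (2 * n + 2)),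
    x s = a n * (t (2 * n + 2) - s) / (t (2 * n + 2) - t (2 * n + 1))

namespace IsZigzag

variable {t a : ℕ → ℝ} {x : ℝ → ℝ}

theorem apply_even (hx : IsZigzag t a x) (hts : StrictMono t) (n : ℕ) :
    x (t (2 * n)) = 0 := by
  simp [hx.up n _ ⟨le_rfl, hts (by omega)⟩]

theorem apply_odd (hx : IsZigzag t a x) (hts : StrictMono t) (n : ℕ) :
    x (t (2 * n + 1)) = a n := by
  have hd : t (2 * n + 2) - t (2 * n + 1) ≠ 0 := (sub_pos.mpr (hts (by omega))).ne'
  rw [hx.down n _ ⟨le_rfl, hts (by omega)⟩, mul_div_assoc, div_self hd, mul_one]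

theorem mem_Icc (hx : IsZigzag t a x) (hts : StrictMono t) (ha : ∀ n, 0 ≤ a n) {m : ℕ} {s : ℝ}
    (hs : s ∈ Ico (t m) (t (m + 1))) : x s ∈ Icc 0 (a (m / 2)) := by
  obtain ⟨k, rfl | rfl⟩ := Nat.even_or_odd' m
  · rw [hx.up k s hs, show 2 * k / 2 = k by omega]
    exact mul_div_mem_Icc (ha k) (sub_nonneg.mpr hs.1) (by linarith [hs.2])
      (sub_pos.mpr (hts (by omega)))
  · rw [hx.down k s hs, show (2 * k + 1) / 2 = k by omega]
    exact mul_div_mem_Icc (ha k) (sub_nonneg.mpr hs.2.le) (by linarith [hs.1])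
      (sub_pos.mpr (hts (by omega)))

theorem le_of_even (hx : IsZigzag t a x) (hts : StrictMono t) (ha : ∀ n, 0 ≤ a n) {m : ℕ}
    (hm : Even m) {s s' : ℝ} (hs : t m ≤ s) (hss' : s ≤ s') (hs' : s' < t (m + 1)) :
    x s ≤ x s' := by
  obtain ⟨k, rfl⟩ := even_iff_two_dvd.mp hm
  have hd := sub_pos.mpr (hts (Nat.lt_succ_self (2 * k)))
  rw [hx.up k s ⟨hs, hss'.trans_lt hs'⟩, hx.up k s' ⟨hs.trans hss', hs'⟩]
  gcongr
  exact ha k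

theorem le_of_odd (hx : IsZigzag t a x) (hts : StrictMono t) (ha : ∀ n, 0 ≤ a n) {m : ℕ}
    (hm : Odd m) {s s' : ℝ} (hs : t m ≤ s) (hss' : s ≤ s') (hs' : s' < t (m + 1)) :
    x s' ≤ x s := by
  obtain ⟨k, rfl⟩ := hm
  have hd := sub_pos.mpr (hts (Nat.lt_succ_self (2 * k + 1)))
  rw [hx.down k s ⟨hs, hss'.trans_lt hs'⟩, hx.down k s' ⟨hs.trans hss', hs'⟩]
  gcongr
  exact ha k

theorem max_abs_sub_sub_zero_le_zigzagPotential_sub (hx : IsZigzag t a x) (hts : StrictMono t)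
    (ha : ∀ n, 0 ≤ a n) {c : ℝ} (hc : 0 ≤ c) {m m' : ℕ} {u v : ℝ}
    (hu : u ∈ Ico (t m) (t (m + 1))) (hv : v ∈ Ico (t m') (t (m' + 1))) (huv : u ≤ v) :
    max (|x v - x u| - c) 0 ≤ zigzagPotential a c m' (x v) - zigzagPotential a c m (x u) := by
  refine _root_.max_abs_sub_sub_zero_le_zigzagPotential_sub hc
    (hts.monotone.le_of_mem_Ico_of_le hu hv huv) (hx.mem_Icc hts ha hu) (hx.mem_Icc hts ha hv) ?_
  rintro rfl
  exact ⟨fun hm => hx.le_of_even hts ha hm hu.1 huv hv.2,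
    fun hm => hx.le_of_odd hts ha (Nat.not_even_iff_odd.mp hm) hu.1 huv hv.2⟩

theorem sum_le_of_mem_Ico (hx : IsZigzag t a x) (hts : StrictMono t) (ht0 : t 0 = 0)
    (htlim : Tendsto t atTop (nhds 1)) (ha : ∀ n, 0 ≤ a n) {c : ℝ} (hc : 0 ≤ c) {n : ℕ}
    {u : Fin (n + 1) → ℝ} (hu : Monotone u) (hu01 : ∀ i, u i ∈ Ico 0 1) :
    ∑ i : Fin n, ENNReal.ofReal (|x (u i.succ) - x (u i.castSucc)| - c) ≤
      2 * ∑' j, ENNReal.ofReal (max (a j - c) 0) := by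
  have hseg : ∀ s ∈ Ico (0 : ℝ) 1, ∃ m, s ∈ Ico (t m) (t (m + 1)) := fun s hs =>
    exists_mem_Ico_of_tendsto htlim (ht0 ▸ hs.1) hs.2
  choose! seg hseg using hseg
  set Ψ : ℝ → ℝ := fun s => zigzagPotential a c (seg s) (x s)
  have hsum : ∑ i : Fin n, max (|x (u i.succ) - x (u i.castSucc)| - c) 0 ≤
      Ψ (u (Fin.last n)) - Ψ (u 0) :=
    sum_le_sub_of_forall_le_sub (g := fun p q => max (|x q - x p| - c) 0)
      (fun p hp q hq hpq =>
        hx.max_abs_sub_sub_zero_le_zigzagPotential_sub hts ha hc (hseg p hp) (hseg q hq) hpq)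
      hu hu01
  have hΨ₀ : 0 ≤ Ψ (u 0) := zigzagPotential_nonneg (hx.mem_Icc hts ha (hseg _ (hu01 0))).2
  calc ∑ i : Fin n, ENNReal.ofReal (|x (u i.succ) - x (u i.castSucc)| - c)
      = ENNReal.ofReal (∑ i : Fin n, max (|x (u i.succ) - x (u i.castSucc)| - c) 0) := by
        rw [ENNReal.ofReal_sum_of_nonneg fun _ _ => le_max_right _ _]
        simp only [ENNReal.ofReal_max, ENNReal.ofReal_zero, max_eq_left, zero_le]
    _ ≤ ENNReal.ofReal (Ψ (u (Fin.last n))) := ENNReal.ofReal_le_ofReal (by linarith)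
    _ ≤ 2 * ∑' j, ENNReal.ofReal (max (a j - c) 0) :=
        ofReal_zigzagPotential_le (hx.mem_Icc hts ha (hseg _ (hu01 _))).2

theorem sum_le (hx : IsZigzag t a x) (hts : StrictMono t) (ht0 : t 0 = 0)
    (htlim : Tendsto t atTop (nhds 1)) (ha : ∀ n, 0 ≤ a n) (hx1 : x 1 = 0) {c : ℝ}
    (hc : 0 ≤ c) {n : ℕ} {u : Fin (n + 1) → ℝ} (hu : Monotone u) (hu0 : u 0 = 0)
    (hu1 : u (Fin.last n) = 1) :
    ∑ i : Fin n, ENNReal.ofReal (|x (u i.succ) - x (u i.castSucc)| - c) ≤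
      2 * ∑' j, ENNReal.ofReal (max (a j - c) 0) := by
  have ht1 : ∀ k, t k ≤ 1 := hts.monotone.ge_of_tendsto htlim
  obtain ⟨N, hN⟩ : ∃ N, ∀ i, u i < 1 → u i ≤ t (2 * N) := by
    have h2N : Tendsto (fun N => t (2 * N)) atTop (nhds 1) :=
      htlim.comp (tendsto_id.const_mul_atTop' two_pos)
    refine (eventually_all.mpr fun i => ?_).exists (f := atTop)
    by_cases h : u i < 1
    · exact (h2N.eventually (lt_mem_nhds h)).mono fun _ hN _ => hN.le
    · exact Eventually.of_forall fun _ h' => absurd h' h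
  have hxu : ∀ i, x (min (u i) (t (2 * N))) = x (u i) := by
    intro i
    rcases (hu (Fin.le_last i)).lt_or_eq with h | h
    · rw [min_eq_left (hN i (hu1 ▸ h))]
    · rw [hu1] at h
      rw [h, min_eq_right (ht1 _), hx1, hx.apply_even hts]
  have hmem : ∀ i, min (u i) (t (2 * N)) ∈ Ico 0 1 := fun i =>
    ⟨le_min (hu0 ▸ hu (Fin.zero_le i)) (ht0 ▸ hts.monotone (Nat.zero_le _)),
      (min_le_right _ _).trans_lt ((hts (Nat.lt_succ_self _)).trans_le (ht1 _))⟩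
  simpa only [hxu] using
    hx.sum_le_of_mem_Ico hts ht0 htlim ha hc (hu.min monotone_const) hmem

theorem two_mul_sum_range_le_truncVar (hx : IsZigzag t a x) (hts : StrictMono t) (ht0 : t 0 = 0)
    (ht1 : ∀ k, t k ≤ 1) (ha : ∀ n, 0 ≤ a n) (hx1 : x 1 = 0) (c : ℝ) (n : ℕ) :
    2 * ∑ j ∈ Finset.range (n + 1), ENNReal.ofReal (a j - c) ≤ truncVar x c 0 1 := by
  set w : ℕ → ℝ := fun k => if k ≤ 2 * n + 1 then t k else 1
  have hw : Monotone w := by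
    intro i j hij
    simp only [w]
    split_ifs
    exacts [hts.monotone hij, ht1 i, by omega, le_rfl]
  have hjump : ∀ k < 2 * n + 2, |x (w (k + 1)) - x (w k)| = a (k / 2) := by
    intro k hk
    obtain ⟨j, rfl | rfl⟩ := Nat.even_or_odd' k
    · simp only [w, if_pos (by omega : 2 * j ≤ 2 * n + 1),
        if_pos (by omega : 2 * j + 1 ≤ 2 * n + 1)]
      rw [hx.apply_odd hts, hx.apply_even hts, sub_zero, abs_of_nonneg (ha j),
        show 2 * j / 2 = j by omega]
    · have hzero : x (w (2 * j + 1 + 1)) = 0 := by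
        simp only [w]
        split_ifs
        exacts [hx.apply_even hts (j + 1), hx1]
      simp only [hzero, w, if_pos (by omega : 2 * j + 1 ≤ 2 * n + 1)]
      rw [hx.apply_odd hts, zero_sub, abs_neg, abs_of_nonneg (ha j),
        show (2 * j + 1) / 2 = j by omega]
  calc 2 * ∑ j ∈ Finset.range (n + 1), ENNReal.ofReal (a j - c)
      = ∑ k ∈ Finset.range (2 * n + 2), ENNReal.ofReal (a (k / 2) - c) :=
        (sum_range_two_mul_div_two (fun j => ENNReal.ofReal (a j - c)) (n + 1)).symm
    _ = ∑ i : Fin (2 * n + 2), ENNReal.ofReal (|x (w (i + 1)) - x (w i)| - c) := by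
        rw [Fin.sum_univ_eq_sum_range (fun k => ENNReal.ofReal (|x (w (k + 1)) - x (w k)| - c))]
        exact Finset.sum_congr rfl fun k hk => by rw [hjump k (Finset.mem_range.mp hk)]
    _ ≤ truncVar x c (w 0) (w (2 * n + 2)) :=
        sum_le_truncVar (u := fun i : Fin (2 * n + 3) => w i) (hw.comp Fin.val_strictMono.monotone)
    _ = truncVar x c 0 1 := by simp [w, ht0]

end IsZigzag

theorem truncVar_zigzag_general (t : ℕ → ℝ) (hts : StrictMono t) (ht0 : t 0 = 0)
    (htlim : Tendsto t atTop (nhds 1))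
    (a : ℕ → ℝ) (hapos : ∀ n, 0 < a n)
    (x : ℝ → ℝ)
    (hup : ∀ n : ℕ, ∀ s ∈ Set.Ico (t (2 * n)) (t (2 * n + 1)),
      x s = a n * (s - t (2 * n)) / (t (2 * n + 1) - t (2 * n)))
    (hdown : ∀ n : ℕ, ∀ s ∈ Set.Ico (t (2 * n + 1)) (t (2 * n + 2)),
      x s = a n * (t (2 * n + 2) - s) / (t (2 * n + 2) - t (2 * n + 1)))
    (hx1 : x 1 = 0) (c : ℝ) (hc : 0 < c) :
    truncVar x c 0 1 = 2 * ∑' n : ℕ, ENNReal.ofReal (max (a n - c) 0) := by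
  have hx : IsZigzag t a x := ⟨hup, hdown⟩
  have ha : ∀ n, 0 ≤ a n := fun n => (hapos n).le
  refine le_antisymm (truncVar_le fun n u hu hu0 hu1 =>
    hx.sum_le hts ht0 htlim ha hx1 hc.le hu hu0 hu1) ?_
  rw [← ENNReal.tsum_mul_left]
  refine ENNReal.tsum_le_of_sum_range_le fun n => ?_
  calc ∑ j ∈ Finset.range n, 2 * ENNReal.ofReal (max (a j - c) 0)
      ≤ 2 * ∑ j ∈ Finset.range (n + 1), ENNReal.ofReal (a j - c) := by
        simp only [← Finset.mul_sum, ENNReal.ofReal_max, ENNReal.ofReal_zero, max_eq_left,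
          zero_le]
        gcongr
        exact n.le_succ
    _ ≤ truncVar x c 0 1 :=
        hx.two_mul_sum_range_le_truncVar hts ht0 (hts.monotone.ge_of_tendsto htlim) ha hx1 c n

/-- For the continuous zigzag function `x¹` with peaks `aₙ` at times `t_{2n+1}`,
`TV^c(x¹,[0,1]) = 2·Σₙ max(aₙ − c, 0)` for every `c > 0`. -/
theorem truncVar_zigzag (t : ℕ → ℝ) (hts : StrictMono t) (ht0 : t 0 = 0)
    (htlim : Tendsto t atTop (nhds 1))
    (a : ℕ → ℝ) (ha : Antitone a) (hapos : ∀ n, 0 < a n)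
    (halim : Tendsto a atTop (nhds 0)) (hadiv : ¬ Summable a)
    (x : ℝ → ℝ)
    (hup : ∀ n : ℕ, ∀ s ∈ Set.Ico (t (2 * n)) (t (2 * n + 1)),
      x s = a n * (s - t (2 * n)) / (t (2 * n + 1) - t (2 * n)))
    (hdown : ∀ n : ℕ, ∀ s ∈ Set.Ico (t (2 * n + 1)) (t (2 * n + 2)),
      x s = a n * (t (2 * n + 2) - s) / (t (2 * n + 2) - t (2 * n + 1)))
    (hx1 : x 1 = 0) (c : ℝ) (hc : 0 < c) :
    truncVar x c 0 1 = 2 * ∑' n : ℕ, ENNReal.ofReal (max (a n - c) 0) :=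
  truncVar_zigzag_general t hts ht0 htlim a hapos x hup hdown hx1 c hc
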